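/- The relation N_2 = −C_2/2 + L^3/2 for local P^2 (eq. (2.7), obtained from the WDVV-type relation for the series 𝕊_i): In ℚ[[q]] define I_1 = 3·Σ_{d≥1}(−1)^d (3d−1)!/(d!)^3 q^d, I_{2,0} = 3·Σ_{d≥1}(−1)^d (3d−1)!/(d!)^3 (3Har[3d−1] − 3Har[d]) q^d, I_{2,1} = 3·Σ_{d≥1}(−1)^d (3d−1)!/(d!)^3 Har[d] q^d with Har[m] = Σ_{k=1}^{m} 1/k, C_1 = 1 + 𝖣I_1, C_2 = 1 + 𝖣((I_1 + 𝖣I_{2,0})/C_1), and N_2 = 𝖣((𝖣I_{2,1})/C_1), where 𝖣 = q·d/dq. Then 2·N_2 = (1+27q)^{−1} − C_2 in ℚ[[q]], i.e. N_2 = −(1/2)C_2 + (1/2)L^3 where L^3 = (1+27q)^{−1}. -/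

import Mathlib

/-!
STATEMENT 9: The relation N₂ = −C₂/2 + L³/2 for local P², i.e.
2·N₂ = (1+27q)⁻¹ − C₂ in ℚ[[q]].
-/

noncomputable section

/-- The derivation `𝖣 = q·d/dq` on `ℚ[[q]]`. -/
def Dq (G : PowerSeries ℚ) : PowerSeries ℚ :=
  PowerSeries.mk fun d => (d : ℚ) * PowerSeries.coeff d G

/-- Harmonic number `Har[m] = Σ_{k=1}^m 1/k`. -/
def Har (m : ℕ) : ℚ := ∑ k ∈ Finset.range m, ((k : ℚ) + 1)⁻¹

/-- `I₁ = 3·Σ_{d≥1} (−1)^d (3d−1)!/(d!)^3 q^d`. -/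
def I₁ : PowerSeries ℚ :=
  PowerSeries.mk fun d => if d = 0 then 0 else
    3 * (-1 : ℚ) ^ d * ((3 * d - 1).factorial : ℚ) / ((d.factorial : ℚ)) ^ 3

/-- `I₂₀ = 3·Σ_{d≥1} (−1)^d (3d−1)!/(d!)^3 (3Har[3d−1] − 3Har[d]) q^d`. -/
def I₂₀ : PowerSeries ℚ :=
  PowerSeries.mk fun d => if d = 0 then 0 else
    3 * (-1 : ℚ) ^ d * ((3 * d - 1).factorial : ℚ) / ((d.factorial : ℚ)) ^ 3
      * (3 * Har (3 * d - 1) - 3 * Har d)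

/-- `I₂₁ = 3·Σ_{d≥1} (−1)^d (3d−1)!/(d!)^3 Har[d] q^d`. -/
def I₂₁ : PowerSeries ℚ :=
  PowerSeries.mk fun d => if d = 0 then 0 else
    3 * (-1 : ℚ) ^ d * ((3 * d - 1).factorial : ℚ) / ((d.factorial : ℚ)) ^ 3 * Har d

/-- `C₁ = 1 + 𝖣I₁`. -/
def C₁ : PowerSeries ℚ := 1 + Dq I₁

/-- `C₂ = 1 + 𝖣((I₁ + 𝖣I₂₀)/C₁)`. -/
def C₂ : PowerSeries ℚ := 1 + Dq ((I₁ + Dq I₂₀) * C₁⁻¹)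

/-- `N₂ = 𝖣((𝖣I₂₁)/C₁)`. -/
def N₂ : PowerSeries ℚ := Dq (Dq I₂₁ * C₁⁻¹)

open PowerSeries

/-!
Both `C₁` and `S₂ = I₁ + 𝖣I₂₀ + 2𝖣I₂₁` satisfy the Picard–Fuchs equation of local `ℙ²`, the
second with an inhomogeneous term: this is a coefficient check using the recursion
`(d+1)³ a_{d+1} = -3d(3d+1)(3d+2) a_d` of the coefficients of `I₁`, in which the harmonic numbers
cancel. The inhomogeneous term is exactly the one produced by `-C₁ · log(1+27q)`, so `S₂` and
`-C₁ · log(1+27q)` solve the same initial value problem. Hence `S₂/C₁ = -log(1+27q)` and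
`C₂ - 1 + 2N₂ = 𝖣(S₂/C₁) = -27q/(1+27q)`.
-/

lemma coeff_ofNat_mul {R : Type*} [CommSemiring R] (n : ℕ) [n.AtLeastTwo] (f : R⟦X⟧) (k : ℕ) :
    coeff k ((no_index (OfNat.ofNat n)) * f) = OfNat.ofNat n * coeff k f := by
  rw [← map_ofNat (C (R := R)) n, coeff_C_mul]

lemma coeff_Dq (n : ℕ) (G : ℚ⟦X⟧) : coeff n (Dq G) = n * coeff n G :=
  coeff_mk _ _

lemma Dq_eq_X_mul_derivative (G : ℚ⟦X⟧) : Dq G = X * d⁄dX ℚ G := by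
  ext (_ | n)
  · simp [coeff_Dq]
  · rw [coeff_Dq, coeff_succ_X_mul, coeff_derivative]; push_cast; ring

lemma Dq_add (f g : ℚ⟦X⟧) : Dq (f + g) = Dq f + Dq g := by
  simp only [Dq_eq_X_mul_derivative, map_add, mul_add]

lemma Dq_neg (f : ℚ⟦X⟧) : Dq (-f) = -Dq f := by
  simp only [Dq_eq_X_mul_derivative, map_neg, mul_neg]

lemma Dq_mul (f g : ℚ⟦X⟧) : Dq (f * g) = Dq f * g + f * Dq g := by
  simp only [Dq_eq_X_mul_derivative, Derivation.leibniz, smul_eq_mul]; ring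

lemma Dq_ofNat_mul (n : ℕ) [n.AtLeastTwo] (f : ℚ⟦X⟧) :
    Dq ((no_index (OfNat.ofNat n)) * f) = OfNat.ofNat n * Dq f := by
  ext k; simp only [coeff_Dq, coeff_ofNat_mul]; ring

lemma Dq_one : Dq 1 = 0 := by
  simp [Dq_eq_X_mul_derivative]

lemma Dq_X : Dq X = X := by
  simp [Dq_eq_X_mul_derivative]

lemma constantCoeff_Dq (G : ℚ⟦X⟧) : constantCoeff (Dq G) = 0 := by
  rw [← coeff_zero_eq_constantCoeff_apply, coeff_Dq, Nat.cast_zero, zero_mul]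

def icoeff (d : ℕ) : ℚ :=
  if d = 0 then 0 else 3 * (-1 : ℚ) ^ d * ((3 * d - 1).factorial : ℚ) / ((d.factorial : ℚ)) ^ 3

lemma icoeff_one : icoeff 1 = -6 := by
  norm_num [icoeff, Nat.factorial]

lemma icoeff_succ {d : ℕ} (hd : d ≠ 0) :
    icoeff (d + 1) = -(3 * d * (3 * d + 1) * (3 * d + 2)) / ((d : ℚ) + 1) ^ 3 * icoeff d := by
  obtain ⟨e, rfl⟩ := Nat.exists_eq_succ_of_ne_zero hd
  have h₁ : 3 * (e + 1 + 1) - 1 = 3 * e + 2 + 1 + 1 + 1 := by omega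
  have h₂ : 3 * (e + 1) - 1 = 3 * e + 2 := by omega
  rw [icoeff, icoeff, if_neg (by omega), if_neg hd, h₁, h₂, Nat.factorial_succ (e + 1),
    Nat.factorial_succ (3 * e + 2 + 1 + 1), Nat.factorial_succ (3 * e + 2 + 1),
    Nat.factorial_succ (3 * e + 2)]
  have : ((e + 1).factorial : ℚ) ≠ 0 := by positivity
  push_cast
  field_simp
  ring

lemma Har_succ (m : ℕ) : Har (m + 1) = Har m + ((m : ℚ) + 1)⁻¹ := by
  simp [Har, Finset.sum_range_succ]

lemma Har_three_mul_succ_sub_one {d : ℕ} (hd : d ≠ 0) :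
    Har (3 * (d + 1) - 1) =
      Har (3 * d - 1) + (3 * d : ℚ)⁻¹ + (3 * d + 1 : ℚ)⁻¹ + (3 * d + 2 : ℚ)⁻¹ := by
  obtain ⟨e, rfl⟩ := Nat.exists_eq_succ_of_ne_zero hd
  rw [show 3 * (e + 1 + 1) - 1 = 3 * e + 2 + 1 + 1 + 1 by omega,
    show 3 * (e + 1) - 1 = 3 * e + 2 by omega, Har_succ, Har_succ, Har_succ]
  push_cast; ring_nf

/-- The Picard–Fuchs operator `θ² + 3q(3θ + 1)(3θ + 2)` of local `ℙ²`, with `θ = 𝖣`. -/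
def picardFuchs (Y : ℚ⟦X⟧) : ℚ⟦X⟧ :=
  Dq (Dq Y) + X * (27 * Dq (Dq Y) + 27 * Dq Y + 6 * Y)

lemma coeff_zero_picardFuchs (Y : ℚ⟦X⟧) : coeff 0 (picardFuchs Y) = 0 := by
  simp [picardFuchs, constantCoeff_Dq]

lemma coeff_succ_picardFuchs (Y : ℚ⟦X⟧) (d : ℕ) :
    coeff (d + 1) (picardFuchs Y) =
      ((d : ℚ) + 1) ^ 2 * coeff (d + 1) Y + 3 * (3 * d + 1) * (3 * d + 2) * coeff d Y := by
  simp only [picardFuchs, map_add, coeff_succ_X_mul, coeff_ofNat_mul, coeff_Dq]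
  push_cast; ring

lemma picardFuchs_add (f g : ℚ⟦X⟧) : picardFuchs (f + g) = picardFuchs f + picardFuchs g := by
  simp only [picardFuchs, Dq_add]; ring

lemma picardFuchs_mul (f g : ℚ⟦X⟧) :
    picardFuchs (f * g) = g * picardFuchs f
      + f * ((1 + 27 * X) * Dq (Dq g) + 27 * X * Dq g) + 2 * (1 + 27 * X) * Dq f * Dq g := by
  simp only [picardFuchs, Dq_mul, Dq_add]; ring

lemma eq_zero_of_picardFuchs_eq_zero {Y : ℚ⟦X⟧} (h₀ : coeff 0 Y = 0) (hY : picardFuchs Y = 0) :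
    Y = 0 := by
  ext d
  induction d with
  | zero => exact h₀
  | succ d ih =>
    have h := coeff_succ_picardFuchs Y d
    rw [hY, ih, map_zero, map_zero, mul_zero, add_zero, eq_comm, mul_eq_zero] at h
    simpa using h.resolve_left (by positivity)

lemma coeff_zero_C₁ : coeff 0 C₁ = 1 := by
  simp [C₁, constantCoeff_Dq]

lemma coeff_C₁ {d : ℕ} (hd : d ≠ 0) : coeff d C₁ = d * icoeff d := by
  simp [C₁, coeff_Dq, I₁, icoeff, hd]

lemma picardFuchs_C₁ : picardFuchs C₁ = 0 := by
  ext (_ | d)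
  · exact coeff_zero_picardFuchs C₁
  rw [coeff_succ_picardFuchs, coeff_C₁ d.succ_ne_zero, map_zero]
  rcases Nat.eq_zero_or_pos d with rfl | hd
  · norm_num [coeff_zero_C₁, icoeff_one]
  rw [coeff_C₁ hd.ne', icoeff_succ hd.ne']
  push_cast
  field_simp
  ring

/-- `C₂ - 1 + 2 N₂ = 𝖣(S₂ / C₁)`. -/
def S₂ : ℚ⟦X⟧ := I₁ + Dq I₂₀ + 2 * Dq I₂₁

lemma coeff_S₂ (d : ℕ) : coeff d S₂ = icoeff d * (1 + 3 * d * Har (3 * d - 1) - d * Har d) := by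
  rcases eq_or_ne d 0 with rfl | hd
  · simp [S₂, I₁, icoeff, constantCoeff_Dq]
  simp only [S₂, I₁, I₂₀, I₂₁, icoeff, map_add, coeff_ofNat_mul, coeff_Dq, coeff_mk, if_neg hd]
  ring

lemma picardFuchs_S₂ : picardFuchs S₂ = -(X * (54 * Dq C₁ + 27 * C₁)) := by
  ext (_ | d)
  · simp [coeff_zero_picardFuchs]
  rw [coeff_succ_picardFuchs, map_neg, coeff_succ_X_mul, map_add, coeff_ofNat_mul,
    coeff_ofNat_mul, coeff_Dq, coeff_S₂, coeff_S₂]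
  rcases Nat.eq_zero_or_pos d with rfl | hd
  · norm_num [coeff_zero_C₁, icoeff_one, icoeff, Har, Finset.sum_range_succ]
  rw [coeff_C₁ hd.ne', icoeff_succ hd.ne', Har_three_mul_succ_sub_one hd.ne', Har_succ]
  have : (d : ℚ) ≠ 0 := by positivity
  push_cast
  field_simp
  ring

lemma one_add_mul_Dq_log : (1 + 27 * X) * Dq (rescale 27 (log ℚ)) = 27 * X := by
  rw [show ∀ f : ℚ⟦X⟧, (1 + 27 * X) * f = f + X * (27 * f) by intro f; ring]
  ext (_ | n)
  · simp [constantCoeff_Dq]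
  rw [map_add, coeff_succ_X_mul, coeff_ofNat_mul, coeff_ofNat_mul, coeff_Dq, coeff_Dq,
    coeff_rescale, coeff_rescale, coeff_log, coeff_log, coeff_X]
  rcases Nat.eq_zero_or_pos n with rfl | hn
  · norm_num
  rw [if_neg (by omega), if_neg hn.ne', if_neg (by omega)]
  have : (n : ℚ) ≠ 0 := by positivity
  simp only [Algebra.algebraMap_self, RingHom.id_apply]
  push_cast
  field_simp
  ring

lemma picardFuchs_C₁_mul_log :
    picardFuchs (C₁ * rescale 27 (log ℚ)) = X * (54 * Dq C₁ + 27 * C₁) := by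
  have h := congrArg Dq one_add_mul_Dq_log
  rw [Dq_mul, Dq_add, Dq_one, Dq_ofNat_mul, Dq_X] at h
  rw [picardFuchs_mul, picardFuchs_C₁]
  linear_combination C₁ * h + 2 * Dq C₁ * one_add_mul_Dq_log

lemma S₂_eq_neg_C₁_mul_log : S₂ = -(C₁ * rescale 27 (log ℚ)) := by
  refine eq_neg_of_add_eq_zero_left (eq_zero_of_picardFuchs_eq_zero ?_ ?_)
  · simp [-coeff_zero_eq_constantCoeff, coeff_S₂, icoeff, coeff_mul, coeff_rescale]
  · rw [picardFuchs_add, picardFuchs_S₂, picardFuchs_C₁_mul_log, neg_add_cancel]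

theorem stmt9 : 2 * N₂ = (1 + 27 * PowerSeries.X)⁻¹ - C₂ := by
  have hC₁ : C₁ * C₁⁻¹ = 1 :=
    PowerSeries.mul_inv_cancel _ (by simp [← coeff_zero_eq_constantCoeff_apply, coeff_zero_C₁])
  have hq : (1 + 27 * X : ℚ⟦X⟧) * (1 + 27 * X)⁻¹ = 1 := PowerSeries.mul_inv_cancel _ (by simp)
  have hS : S₂ * C₁⁻¹ = -rescale 27 (log ℚ) := by
    rw [S₂_eq_neg_C₁_mul_log]; linear_combination (-rescale 27 (log ℚ)) * hC₁
  have hsum : C₂ + 2 * N₂ = 1 - Dq (rescale 27 (log ℚ)) := by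
    rw [C₂, N₂, ← Dq_ofNat_mul, add_assoc, ← Dq_add, sub_eq_add_neg, ← Dq_neg, ← hS, S₂]
    congr 2
    ring
  linear_combination hsum - (1 + 27 * X)⁻¹ * one_add_mul_Dq_log
    + (Dq (rescale 27 (log ℚ)) - 1) * hq

end
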